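/- There is no linear map Δ on operators of H⊗H (dim H ≥ 2) satisfying Δ(ρ) = ρ ⊗ ρ for all density matrices ρ on H (the no-cloning obstruction for linear channels). -/
import Mathlib


open Matrix Kronecker ComplexOrder

theorem no_linear_cloning {n : ℕ} (hn : 2 ≤ n) :
    ¬ ∃ Δ : Matrix (Fin n) (Fin n) ℂ →ₗ[ℂ] Matrix (Fin n × Fin n) (Fin n × Fin n) ℂ,
      ∀ ρ : Matrix (Fin n) (Fin n) ℂ, ρ.PosSemidef → ρ.trace = 1 →
        Δ ρ = ρ ⊗ₖ ρ := by
  rintro ⟨Δ, hΔ⟩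
  have h0 : 0 < n := by omega
  have h1 : 1 < n := by omega
  set i0 : Fin n := ⟨0, h0⟩
  set i1 : Fin n := ⟨1, h1⟩
  have hne : i0 ≠ i1 := by simp [i0, i1, Fin.ext_iff]
  set d0 : Fin n → ℂ := fun i => if i = i0 then 1 else 0 with hd0
  set d1 : Fin n → ℂ := fun i => if i = i1 then 1 else 0 with hd1
  have hps0 : (Matrix.diagonal d0).PosSemidef := by
    refine posSemidef_diagonal_iff.mpr fun i => ?_
    by_cases h : i = i0 <;> simp [hd0, h]
  have hps1 : (Matrix.diagonal d1).PosSemidef := by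
    refine posSemidef_diagonal_iff.mpr fun i => ?_
    by_cases h : i = i1 <;> simp [hd1, h]
  have htr0 : (Matrix.diagonal d0).trace = 1 := by
    simp [Matrix.trace_diagonal, hd0]
  have htr1 : (Matrix.diagonal d1).trace = 1 := by
    simp [Matrix.trace_diagonal, hd1]
  set ρm : Matrix (Fin n) (Fin n) ℂ :=
    (1/2 : ℂ) • Matrix.diagonal d0 + (1/2 : ℂ) • Matrix.diagonal d1 with hρm
  have hpsm : ρm.PosSemidef := by
    have heq : ρm = Matrix.diagonal (fun i => (1/2 : ℂ) * d0 i + (1/2 : ℂ) * d1 i) := by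
      ext i j
      by_cases h : i = j <;>
        simp [hρm, Matrix.diagonal_apply, Matrix.add_apply, Matrix.smul_apply, h]
    rw [heq]
    refine posSemidef_diagonal_iff.mpr fun i => ?_
    by_cases h : i = i0 <;> by_cases h' : i = i1 <;> simp [hd0, hd1, h, h', hne, hne.symm] <;> (rw [Complex.le_def]; norm_num)
  have htrm : ρm.trace = 1 := by
    simp [hρm, Matrix.trace_add, Matrix.trace_smul, htr0, htr1]
    ring
  have key : Δ ρm = (1/2 : ℂ) • (Matrix.diagonal d0 ⊗ₖ Matrix.diagonal d0)
      + (1/2 : ℂ) • (Matrix.diagonal d1 ⊗ₖ Matrix.diagonal d1) := by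
    rw [hρm, map_add, _root_.map_smul, _root_.map_smul, hΔ _ hps0 htr0, hΔ _ hps1 htr1]
  have keym := hΔ ρm hpsm htrm
  rw [keym] at key
  have := congrFun (congrFun key (i0, i1)) (i0, i1)
  simp [Matrix.kroneckerMap_apply, hρm, Matrix.add_apply, Matrix.smul_apply,
    Matrix.diagonal_apply, hd0, hd1, hne, hne.symm] at this
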